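/- Conversely, if Var(E[f | θ_i]) = E[Var(f | θ_{\setminus i})] for square-integrable f of independent inputs θ_i, θ_{\setminus i}, then f decomposes additively: f = g(θ_i) + h(θ_{\setminus i}) almost surely, with g(θ_i) = E[f|θ_i] and h(θ_{\setminus i}) = E[f|θ_{\setminus i}] - E[f]. -/

import Mathlib

/-!
Write `g a = ∫ f(a, ·) dν` and `h b = ∫ f(·, b) dμ`. Fubini gives `cov(f, g) = Var g` and
`cov(f, h) = Var h`, while `g` and `h` are uncorrelated since they depend on independent
coordinates; hence `Var(f - g - h) = Var f - Var g - Var h`. By the law of total variance the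
hypothesis says `Var g = Var f - Var h`, so `f - g - h` is almost surely equal to its mean `-∫ f`.
-/

open MeasureTheory ProbabilityTheory

theorem sq_integral_le_integral_sq {Ω : Type*} [MeasurableSpace Ω] {κ : Measure Ω}
    [IsProbabilityMeasure κ] {u : Ω → ℝ} (hu : MemLp u 2 κ) :
    (∫ x, u x ∂κ) ^ 2 ≤ ∫ x, u x ^ 2 ∂κ := by
  have h := variance_nonneg u κ
  rw [variance_eq_sub hu] at h
  simpa using h

section Prod

variable {A B : Type*} [MeasurableSpace A] [MeasurableSpace B] {μ : Measure A} {ν : Measure B}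

theorem MeasureTheory.MemLp.integral_prod_left [IsFiniteMeasure μ] [IsProbabilityMeasure ν]
    {f : A × B → ℝ}
    (hf : MemLp f 2 (μ.prod ν)) : MemLp (fun a => ∫ b, f (a, b) ∂ν) 2 μ := by
  have hf_int := hf.integrable one_le_two
  have hf_sq := hf.integrable_sq
  have h_slices : ∀ᵐ a ∂μ, MemLp (fun b => f (a, b)) 2 ν := by
    filter_upwards [hf_sq.prod_right_ae, hf.aestronglyMeasurable.prodMk_left] with a h_sq h_meas
    exact (memLp_two_iff_integrable_sq h_meas).mpr h_sq
  refine (memLp_two_iff_integrable_sq hf_int.integral_prod_left.aestronglyMeasurable).mpr ?_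
  refine hf_sq.integral_prod_left.mono' (hf_int.integral_prod_left.aestronglyMeasurable.pow 2) ?_
  filter_upwards [h_slices] with a ha
  rw [Real.norm_of_nonneg (sq_nonneg _)]
  exact sq_integral_le_integral_sq ha

theorem MeasureTheory.MemLp.integral_prod_right [IsProbabilityMeasure μ] [IsFiniteMeasure ν]
    {f : A × B → ℝ}
    (hf : MemLp f 2 (μ.prod ν)) : MemLp (fun b => ∫ a, f (a, b) ∂μ) 2 ν :=
  MemLp.integral_prod_left (hf.comp_measurePreserving Measure.measurePreserving_swap)

variable [IsProbabilityMeasure μ] [IsProbabilityMeasure ν] {f : A × B → ℝ}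

theorem covariance_comp_fst_prod (hf : MemLp f 2 (μ.prod ν)) {u : A → ℝ} (hu : MemLp u 2 μ) :
    cov[f, fun p => u p.1; μ.prod ν] = cov[fun a => ∫ b, f (a, b) ∂ν, u; μ] := by
  have h_mul : Integrable (fun p => f p * u p.1) (μ.prod ν) :=
    hf.integrable_mul (hu.comp_fst ν)
  rw [covariance_eq_sub hf (hu.comp_fst ν), covariance_eq_sub hf.integral_prod_left hu]
  simp only [Pi.mul_apply]
  rw [integral_prod _ h_mul, integral_prod _ (hf.integrable one_le_two), integral_fun_fst]
  simp [integral_mul_const]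

theorem covariance_comp_snd_prod (hf : MemLp f 2 (μ.prod ν)) {v : B → ℝ} (hv : MemLp v 2 ν) :
    cov[f, fun p => v p.2; μ.prod ν] = cov[fun b => ∫ a, f (a, b) ∂μ, v; ν] := by
  rw [← Measure.prod_swap]
  exact (covariance_map_equiv f _ MeasurableEquiv.prodComm).trans
    (covariance_comp_fst_prod (hf.comp_measurePreserving Measure.measurePreserving_swap) hv)

theorem integral_partial_variance_eq_variance_sub (hf : MemLp f 2 (μ.prod ν)) :
    ∫ b, ((∫ a, f (a, b) ^ 2 ∂μ) - (∫ a, f (a, b) ∂μ) ^ 2) ∂ν =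
      Var[f; μ.prod ν] - Var[fun b => ∫ a, f (a, b) ∂μ; ν] := by
  have hh := hf.integral_prod_right
  rw [integral_sub hf.integrable_sq.integral_prod_right hh.integrable_sq,
    ← integral_prod_symm _ hf.integrable_sq, variance_eq_sub hf, variance_eq_sub hh,
    ← integral_prod_symm _ (hf.integrable one_le_two)]
  simp only [Pi.pow_apply]
  ring

theorem variance_sub_fst_integral_sub_snd_integral (hf : MemLp f 2 (μ.prod ν)) :
    Var[f - (fun p => ∫ b, f (p.1, b) ∂ν) - (fun p => ∫ a, f (a, p.2) ∂μ); μ.prod ν] =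
      Var[f; μ.prod ν] - Var[fun a => ∫ b, f (a, b) ∂ν; μ] -
        Var[fun b => ∫ a, f (a, b) ∂μ; ν] := by
  have hg := hf.integral_prod_left
  have hh := hf.integral_prod_right
  have hG := hg.comp_fst ν
  have hH := hh.comp_snd μ
  rw [variance_sub (hf.sub hG) hH, variance_sub hf hG, covariance_sub_left hf hG hH,
    covariance_comp_fst_prod hf hg, covariance_comp_snd_prod hf hh,
    covariance_fst_snd_prod hg hh, measurePreserving_fst.variance_fun_comp hg.aemeasurable,
    measurePreserving_snd.variance_fun_comp hh.aemeasurable, covariance_self hg.aemeasurable,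
    covariance_self hh.aemeasurable]
  ring

theorem integral_sub_fst_integral_sub_snd_integral (hf : MemLp f 2 (μ.prod ν)) :
    ∫ p, (f - (fun p : A × B => ∫ b, f (p.1, b) ∂ν) - (fun p : A × B => ∫ a, f (a, p.2) ∂μ)) p
      ∂(μ.prod ν) = -∫ p, f p ∂(μ.prod ν) := by
  have hf_int := hf.integrable one_le_two
  rw [integral_sub' (hf_int.sub (hf_int.integral_prod_left.comp_fst ν))
      (hf_int.integral_prod_right.comp_snd μ),
    integral_sub' hf_int (hf_int.integral_prod_left.comp_fst ν)]
  have h_fst := integral_fun_fst (μ := μ) (ν := ν) (fun a => ∫ b, f (a, b) ∂ν)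
  have h_snd := integral_fun_snd (μ := μ) (ν := ν) (fun b => ∫ a, f (a, b) ∂μ)
  simp only [probReal_univ, one_smul, ← integral_prod _ hf_int,
    ← integral_prod_symm _ hf_int] at h_fst h_snd
  rw [h_fst, h_snd]
  ring

end Prod

/-- Converse: if the first-order Sobol numerator `Var(E[f|θ_i])` equals the total
numerator `E[Var(f|θ_{∖i})]` for a square-integrable `f` of independent inputs
(product probability space), then `f` decomposes additively almost surely as
`f = E[f|θ_i] + (E[f|θ_{∖i}] - E[f])`. -/
theorem sobol_equality_implies_additive
    {A B : Type*} [MeasurableSpace A] [MeasurableSpace B]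
    (μ : Measure A) (ν : Measure B) [IsProbabilityMeasure μ] [IsProbabilityMeasure ν]
    (f : A × B → ℝ) (hf : MemLp f 2 (μ.prod ν))
    (heq : (∫ a, (∫ b, f (a, b) ∂ν)^2 ∂μ) - (∫ a, (∫ b, f (a, b) ∂ν) ∂μ)^2 =
      ∫ b, ((∫ a, (f (a, b))^2 ∂μ) - (∫ a, f (a, b) ∂μ)^2) ∂ν) :
    ∀ᵐ p ∂(μ.prod ν),
      f p = (∫ b, f (p.1, b) ∂ν) + ((∫ a, f (a, p.2) ∂μ) - ∫ q, f q ∂(μ.prod ν)) := by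
  have var_fst : Var[fun a => ∫ b, f (a, b) ∂ν; μ] =
      Var[f; μ.prod ν] - Var[fun b => ∫ a, f (a, b) ∂μ; ν] := by
    rw [variance_eq_sub hf.integral_prod_left, ← integral_partial_variance_eq_variance_sub hf]
    exact heq
  have var_remainder : Var[f - (fun p => ∫ b, f (p.1, b) ∂ν) - (fun p => ∫ a, f (a, p.2) ∂μ);
      μ.prod ν] = 0 := by
    rw [variance_sub_fst_integral_sub_snd_integral hf, var_fst]
    ring
  have remainder_memLp :=
    (hf.sub (hf.integral_prod_left.comp_fst ν)).sub (hf.integral_prod_right.comp_snd μ)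
  filter_upwards [ae_eq_integral_of_variance_eq_zero remainder_memLp var_remainder] with p hp
  rw [integral_sub_fst_integral_sub_snd_integral hf, Pi.sub_apply, Pi.sub_apply] at hp
  linarith
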